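/- arXiv:math/0603192 — 2 statements merged into one kernel-verified Lean document; each statement's English description precedes it below -/
import Mathlib

section
/- In the self-similar fragmentation at nodes with index 1/α, α ∈ (1,2), the quantity f_b(ε) := ∫_{S↓} Σᵢ xᵢ 1_{xᵢ < ε} ν₁(dx) equals (1/Γ(1+1/α)) (ε/(1-ε))^{1-1/α}, where ν₁ is the dislocation measure given by ∫ F(x) ν₁(dx) = (α(α-1)Γ(1-1/α)/Γ(2-α)) E[S₁ F((ΔS_t/S₁, t ≤ 1))] with S a stable subordinator of Laplace exponent λ^{1/α}. -/
open MeasureTheory Filter Set Real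

/-- Stable fragmentation at nodes, `α ∈ (1,2)`: with the dislocation measure
`∫ F(x) ν₁(dx) = (α(α-1)Γ(1-1/α)/Γ(2-α)) E[S₁ F((ΔS_t/S₁, t ≤ 1))]`, where `S` is a
stable subordinator of Laplace exponent `λ^{1/α}` (encoded through its value `S₁`, its
ranked jumps `Δ`, and the Mecke/compensation formula for the Poisson point process of
jumps with intensity `π_*(dr) = (αΓ(1-1/α))⁻¹ r^{-1-1/α} dr`), one has
`f_b(ε) := ∫ Σᵢ xᵢ 1_{xᵢ<ε} ν₁(dx) = (1/Γ(1+1/α)) (ε/(1-ε))^{1-1/α}`. -/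
theorem stmt15 {Ω : Type*} [MeasureSpace Ω]
    (hP : IsProbabilityMeasure (volume : Measure Ω))
    (α ε : ℝ) (hα : α ∈ Set.Ioo (1 : ℝ) 2) (hε : ε ∈ Set.Ioo (0 : ℝ) 1)
    (S1 : Ω → ℝ) (Δ : Ω → ℕ → ℝ)
    (hS1meas : Measurable S1) (hΔmeas : ∀ i, Measurable fun ω => Δ ω i)
    (hpos : ∀ ω, 0 < S1 ω) (hΔpos : ∀ ω i, 0 ≤ Δ ω i)
    (hranked : ∀ ω, Antitone (Δ ω)) (hsum : ∀ ω, S1 ω = ∑' i, Δ ω i)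
    (hlap : ∀ y : ℝ, 0 ≤ y →
      ∫ ω, Real.exp (-y * S1 ω) = Real.exp (-(y ^ (1 / α))))
    (hMecke : ∀ g : ℝ → ℝ → ℝ, Measurable (Function.uncurry g) →
      (∀ r s, 0 ≤ g r s) →
      ∫ ω, (∑' i, g (Δ ω i) (S1 ω - Δ ω i))
        = ∫ ω, (∫ r in Set.Ioi (0 : ℝ),
            g r (S1 ω) * ((α * Real.Gamma (1 - 1 / α))⁻¹ * r ^ (-1 - 1 / α))))
    (hmom : ∫ ω, (S1 ω) ^ (1 - 1 / α) = Real.Gamma (2 - α) / Real.Gamma (1 / α)) :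
    (α * (α - 1) * Real.Gamma (1 - 1 / α) / Real.Gamma (2 - α)) *
      ∫ ω, S1 ω * (∑' i, (Δ ω i / S1 ω) * (if Δ ω i / S1 ω < ε then (1 : ℝ) else 0))
      = (1 / Real.Gamma (1 + 1 / α)) * (ε / (1 - ε)) ^ (1 - 1 / α) := by
  obtain ⟨hα1, hα2⟩ := hα
  obtain ⟨hε0, hε1⟩ := hε
  have hαpos : (0:ℝ) < α := by linarith
  have hinvα : (0:ℝ) < 1/α := by positivity
  have hinvα1 : 1/α < 1 := by rw [div_lt_one hαpos]; linarith
  have h1ε : (0:ℝ) < 1 - ε := by linarith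
  have hexp : (0:ℝ) < 1 - 1/α := by linarith
  set c : ℝ := (α * Real.Gamma (1 - 1/α))⁻¹ with hc
  set g : ℝ → ℝ → ℝ := fun r s => if (1-ε)*r < ε*s then max r 0 else 0 with hg
  have hgmeas : Measurable (Function.uncurry g) := by
    apply Measurable.ite
    · exact measurableSet_lt (measurable_fst.const_mul _) (measurable_snd.const_mul _)
    · exact measurable_fst.max measurable_const
    · exact measurable_const
  have hgnn : ∀ r s, 0 ≤ g r s := by
    intro r s
    simp only [hg]
    split
    · exact le_max_right r 0
    · exact le_refl 0
  have hstep1 : ∀ ω, S1 ω * (∑' i, (Δ ω i / S1 ω) * (if Δ ω i / S1 ω < ε then (1:ℝ) else 0))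
      = ∑' i, g (Δ ω i) (S1 ω - Δ ω i) := by
    intro ω
    rw [← tsum_mul_left]
    refine tsum_congr fun i => ?_
    have hS := hpos ω
    have hcond : (Δ ω i / S1 ω < ε) ↔ ((1-ε) * Δ ω i < ε * (S1 ω - Δ ω i)) := by
      rw [div_lt_iff₀ hS]
      constructor <;> intro h <;> nlinarith
    simp only [hg]
    by_cases h : (1-ε) * Δ ω i < ε * (S1 ω - Δ ω i)
    · rw [if_pos h, if_pos (hcond.mpr h), max_eq_left (hΔpos ω i), mul_one]
      field_simp
    · rw [if_neg h, if_neg (fun h' => h (hcond.mp h')), mul_zero, mul_zero]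
  have hK : ∀ s : ℝ, 0 < s →
      (∫ r in Set.Ioi (0:ℝ), g r s * (c * r ^ (-1 - 1/α)))
      = (c * (ε/(1-ε)) ^ (1 - 1/α) * (α/(α-1))) * s ^ (1 - 1/α) := by
    intro s hs
    set K : ℝ := ε * s / (1-ε) with hKdef
    have hKpos : 0 < K := by positivity
    have hind : ∀ r : ℝ, g r s * (c * r ^ (-1 - 1/α))
        = Set.indicator (Set.Ioo 0 K) (fun r => c * r ^ (-(1/α))) r := by
      intro r
      rcases le_or_gt r 0 with h0 | h0
      · have hni : r ∉ Set.Ioo (0:ℝ) K := fun h => absurd h.1 (not_lt.mpr h0)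
        rw [Set.indicator_of_notMem hni]
        have hm : max r 0 = 0 := max_eq_right h0
        simp only [hg]
        split <;> simp [hm]
      · have hcond : ((1-ε)*r < ε*s) ↔ r < K := by
          rw [hKdef, lt_div_iff₀ h1ε]
          constructor <;> intro h <;> nlinarith
        by_cases hr : r < K
        · have hgr : g r s = r := by
            simp only [hg, if_pos (hcond.mpr hr)]
            exact max_eq_left h0.le
          rw [hgr, Set.indicator_of_mem (Set.mem_Ioo.mpr ⟨h0, hr⟩)]
          rw [show -(1/α) = 1 + (-1 - 1/α) by ring, Real.rpow_add h0, Real.rpow_one]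
          ring
        · have hgr : g r s = 0 := by
            simp only [hg, if_neg (fun h => hr (hcond.mp h))]
          rw [hgr, Set.indicator_of_notMem (fun h => hr h.2)]
          ring
    calc ∫ r in Set.Ioi (0:ℝ), g r s * (c * r ^ (-1 - 1/α))
        = ∫ r in Set.Ioi (0:ℝ), Set.indicator (Set.Ioo 0 K) (fun r => c * r ^ (-(1/α))) r := by
          simp_rw [hind]
      _ = ∫ r in Set.Ioi (0:ℝ) ∩ Set.Ioo 0 K, c * r ^ (-(1/α)) :=
          setIntegral_indicator measurableSet_Ioo
      _ = ∫ r in Set.Ioo (0:ℝ) K, c * r ^ (-(1/α)) := by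
          rw [Set.inter_eq_right.mpr (fun x hx => hx.1)]
      _ = c * ∫ r in Set.Ioo (0:ℝ) K, r ^ (-(1/α)) := by
          rw [integral_const_mul]
      _ = c * ∫ r in (0:ℝ)..K, r ^ (-(1/α)) := by
          rw [intervalIntegral.integral_of_le hKpos.le, integral_Ioc_eq_integral_Ioo]
      _ = c * ((K ^ (-(1/α) + 1) - (0:ℝ) ^ (-(1/α) + 1)) / (-(1/α) + 1)) := by
          rw [integral_rpow (Or.inl (by linarith : (-1:ℝ) < -(1/α)))]
      _ = (c * (ε/(1-ε)) ^ (1 - 1/α) * (α/(α-1))) * s ^ (1 - 1/α) := by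
          rw [Real.zero_rpow (by linarith : -(1/α) + 1 ≠ 0)]
          rw [show -(1/α) + 1 = 1 - 1/α by ring]
          rw [show K = (ε/(1-ε)) * s by rw [hKdef]; ring]
          rw [Real.mul_rpow (by positivity) hs.le]
          have hα1' : α - 1 ≠ 0 := by linarith
          have hα' : α ≠ 0 := by linarith
          field_simp
          ring
  simp_rw [hstep1]
  rw [hMecke g hgmeas hgnn]
  have hfun : ∀ ω, (∫ r in Set.Ioi (0:ℝ), g r (S1 ω) * (c * r ^ (-1 - 1/α)))
      = (c * (ε/(1-ε)) ^ (1 - 1/α) * (α/(α-1))) * (S1 ω) ^ (1 - 1/α) :=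
    fun ω => hK (S1 ω) (hpos ω)
  simp_rw [hfun]
  rw [integral_const_mul, hmom]
  have hG1 : 0 < Real.Gamma (1 - 1/α) := Real.Gamma_pos_of_pos (by linarith)
  have hG2 : 0 < Real.Gamma (2 - α) := Real.Gamma_pos_of_pos (by linarith)
  have hG3 : 0 < Real.Gamma (1/α) := Real.Gamma_pos_of_pos hinvα
  rw [show (1:ℝ) + 1/α = 1/α + 1 by ring, Real.Gamma_add_one (ne_of_gt hinvα)]
  have hα1' : α - 1 ≠ 0 := by linarith
  have hα' : α ≠ 0 := by linarith
  simp only [hc]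
  generalize Real.Gamma (1 - 1/α) = G1 at hG1 ⊢
  generalize Real.Gamma (2 - α) = G2 at hG2 ⊢
  generalize Real.Gamma (1/α) = G3 at hG3 ⊢
  generalize (ε/(1-ε)) ^ (1 - 1/α) = X
  have h1 : G1 ≠ 0 := ne_of_gt hG1
  have h2 : G2 ≠ 0 := ne_of_gt hG2
  have h3 : G3 ≠ 0 := ne_of_gt hG3
  field_simp
end

section
/- With the same dislocation measure ν₁ as in the stable fragmentation at nodes, φ_b(ε) := ∫_{S↓} (Σᵢ 1_{xᵢ>ε} - 1) ν₁(dx) = ((α-1)/Γ(1+1/α)) (ε/(1-ε))^{-1/α} - f_b(ε); consequently ε^{1/α} φ_b(ε) → (α-1)/Γ(1+1/α) as ε → 0. -/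
open MeasureTheory Filter Set Real

lemma stmt16_inner1 (α ε s : ℝ) (hα1 : 1 < α) (hα2 : α < 2) (hε : 0 < ε) (hε1 : ε < 1)
    (hs : 0 < s) :
    ∫ r in Set.Ioi (0:ℝ),
        (if ε * (r + s) < r then max s 0 else 0) *
          ((α * Real.Gamma (1 - 1 / α))⁻¹ * r ^ (-1 - 1 / α))
      = ((α * Real.Gamma (1 - 1 / α))⁻¹ * α * (ε / (1 - ε)) ^ (-(1 / α))) *
          s ^ (1 - 1 / α) := by
  have hαpos : 0 < α := by linarith
  have hia : 0 < 1 / α := by positivity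
  have hia1 : 1 / α < 1 := by rw [div_lt_one hαpos]; linarith
  set c : ℝ := (α * Real.Gamma (1 - 1 / α))⁻¹ with hc
  have h1ε : 0 < 1 - ε := by linarith
  set q : ℝ := ε / (1 - ε) with hqdef
  have hq : 0 < q := by positivity
  set a : ℝ := q * s with hadef
  have ha : 0 < a := by positivity
  have hcond : ∀ r : ℝ, 0 < r → (ε * (r + s) < r ↔ a < r) := by
    intro r hr
    rw [hadef, hqdef, div_mul_eq_mul_div, div_lt_iff₀ h1ε]
    constructor <;> intro h <;> nlinarith
  have heq : Set.EqOn
      (fun r : ℝ => (if ε * (r + s) < r then max s 0 else 0) * (c * r ^ (-1 - 1 / α)))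
      ((Set.Ioi a).indicator (fun r : ℝ => (s * c) * r ^ (-1 - 1 / α)))
      (Set.Ioi (0:ℝ)) := by
    intro r hr
    simp only [Set.mem_Ioi] at hr
    dsimp only
    by_cases h : a < r
    · rw [Set.indicator_of_mem (Set.mem_Ioi.2 h)]
      rw [if_pos ((hcond r hr).2 h), max_eq_left hs.le]
      ring
    · rw [Set.indicator_of_notMem (by simpa using h)]
      rw [if_neg (fun hh => h ((hcond r hr).1 hh)), zero_mul]
  rw [setIntegral_congr_fun measurableSet_Ioi heq,
    setIntegral_indicator measurableSet_Ioi, Set.Ioi_inter_Ioi,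
    max_eq_right ha.le, MeasureTheory.integral_const_mul,
    integral_Ioi_rpow_of_lt (by linarith : -1 - 1/α < -1) ha]
  have h1 : (-1 - 1/α) + 1 = -(1/α) := by ring
  rw [h1]
  have h2 : a ^ (-(1/α)) = q ^ (-(1/α)) * s ^ (-(1/α)) :=
    Real.mul_rpow hq.le hs.le
  have h3 : s * s ^ (-(1/α)) = s ^ (1 - 1/α) := by
    rw [show (1 : ℝ) - 1/α = 1 + -(1/α) by ring, Real.rpow_add hs, Real.rpow_one]
  rw [h2, ← h3]
  field_simp

lemma stmt16_inner2 (α ε s : ℝ) (hα1 : 1 < α) (hα2 : α < 2) (hε : 0 < ε) (hε1 : ε < 1)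
    (hs : 0 < s) :
    ∫ r in Set.Ioi (0:ℝ),
        (if ε * (r + s) < r then 0 else max r 0) *
          ((α * Real.Gamma (1 - 1 / α))⁻¹ * r ^ (-1 - 1 / α))
      = ((α * Real.Gamma (1 - 1 / α))⁻¹ * (1 - 1 / α)⁻¹ * (ε / (1 - ε)) ^ (1 - 1 / α)) *
          s ^ (1 - 1 / α) := by
  have hαpos : 0 < α := by linarith
  have hia : 0 < 1 / α := by positivity
  have hia1 : 1 / α < 1 := by rw [div_lt_one hαpos]; linarith
  set c : ℝ := (α * Real.Gamma (1 - 1 / α))⁻¹ with hc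
  have h1ε : 0 < 1 - ε := by linarith
  set q : ℝ := ε / (1 - ε) with hqdef
  have hq : 0 < q := by positivity
  set a : ℝ := q * s with hadef
  have ha : 0 < a := by positivity
  have hcond : ∀ r : ℝ, 0 < r → (ε * (r + s) < r ↔ a < r) := by
    intro r hr
    rw [hadef, hqdef, div_mul_eq_mul_div, div_lt_iff₀ h1ε]
    constructor <;> intro h <;> nlinarith
  have heq : Set.EqOn
      (fun r : ℝ => (if ε * (r + s) < r then 0 else max r 0) * (c * r ^ (-1 - 1 / α)))
      ((Set.Ioc 0 a).indicator (fun r : ℝ => c * r ^ (-(1 / α))))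
      (Set.Ioi (0:ℝ)) := by
    intro r hr
    simp only [Set.mem_Ioi] at hr
    dsimp only
    by_cases h : a < r
    · rw [Set.indicator_of_notMem (by simp [Set.mem_Ioc, not_le.2 h] : r ∉ Set.Ioc 0 a)]
      rw [if_pos ((hcond r hr).2 h), zero_mul]
    · rw [Set.indicator_of_mem (Set.mem_Ioc.2 ⟨hr, not_lt.1 h⟩)]
      rw [if_neg (fun hh => h ((hcond r hr).1 hh)), max_eq_left hr.le]
      rw [show -(1/α) = 1 + (-1 - 1/α) by ring, Real.rpow_add hr, Real.rpow_one]
      ring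
  rw [setIntegral_congr_fun measurableSet_Ioi heq,
    setIntegral_indicator measurableSet_Ioc,
    Set.inter_eq_self_of_subset_right Set.Ioc_subset_Ioi_self,
    MeasureTheory.integral_const_mul,
    ← intervalIntegral.integral_of_le ha.le,
    integral_rpow (Or.inl (by linarith : (-1:ℝ) < -(1/α)))]
  rw [Real.zero_rpow (by linarith : (0:ℝ) < -(1/α) + 1).ne']
  have h2 : a ^ (-(1/α) + 1) = q ^ (-(1/α) + 1) * s ^ (-(1/α) + 1) :=
    Real.mul_rpow hq.le hs.le
  rw [h2, show -(1/α) + 1 = 1 - 1/α by ring]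
  field_simp
  ring

lemma stmt16_pointwise (ε s : ℝ) (d : ℕ → ℝ) (hs : 0 < s) (hd : ∀ i, 0 ≤ d i)
    (hsum : s = ∑' i, d i) (hε : 0 < ε) :
    s * ((∑' i, (if ε < d i / s then (1:ℝ) else 0)) - 1)
      = (∑' i, (if ε * (d i + (s - d i)) < d i then max (s - d i) 0 else 0))
        - (∑' i, (if ε * (d i + (s - d i)) < d i then 0 else max (d i) 0)) := by
  have hsummable : Summable d := by
    by_contra h
    rw [tsum_eq_zero_of_not_summable h] at hsum
    exact hs.ne' hsum
  have hle : ∀ i, d i ≤ s := by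
    intro i
    rw [hsum]
    exact Summable.le_tsum hsummable i (fun j _ => hd j)
  have hcond2 : ∀ i, (ε * (d i + (s - d i)) < d i ↔ ε * s < d i) := by
    intro i
    have : d i + (s - d i) = s := by ring
    rw [this]
  have hfin : {i : ℕ | ε * s < d i}.Finite := by
    have h0 : Filter.Tendsto d Filter.atTop (nhds 0) := hsummable.tendsto_atTop_zero
    have hev : ∀ᶠ i in Filter.atTop, d i < ε * s :=
      h0.eventually (gt_mem_nhds (by positivity))
    rw [← Nat.cofinite_eq_atTop] at hev
    have := Filter.eventually_cofinite.mp (hev.mono fun i hi => not_lt.2 hi.le)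
    simpa using this
  have hsupp : ∀ (f : ℕ → ℝ), Summable (fun i => if ε * s < d i then f i else 0) := by
    intro f
    apply summable_of_ne_finset_zero (s := hfin.toFinset)
    intro i hi
    exact if_neg (fun h => hi (hfin.mem_toFinset.2 h))
  have hA := hsupp (fun i => s - d i)
  have hB := hsupp (fun i => d i)
  have hC : Summable (fun i => if ε * s < d i then 0 else d i) :=
    Summable.of_nonneg_of_le
      (fun i => by by_cases h : ε * s < d i <;> simp [h, hd i])
      (fun i => by by_cases h : ε * s < d i <;> simp [h, hd i]) hsummable
  have e0 : (∑' i, (if ε < d i / s then (1:ℝ) else 0))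
      = ∑' i, (if ε * s < d i then (1:ℝ) else 0) :=
    tsum_congr fun i => if_congr (lt_div_iff₀ hs) rfl rfl
  have e1 : (∑' i, (if ε * (d i + (s - d i)) < d i then max (s - d i) 0 else 0))
      = ∑' i, (if ε * s < d i then s - d i else 0) :=
    tsum_congr fun i => if_congr (hcond2 i) (max_eq_left (sub_nonneg.2 (hle i))) rfl
  have e2 : (∑' i, (if ε * (d i + (s - d i)) < d i then 0 else max (d i) 0))
      = ∑' i, (if ε * s < d i then 0 else d i) :=
    tsum_congr fun i => if_congr (hcond2 i) rfl (max_eq_left (hd i))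
  have h1 : s * (∑' i, (if ε * s < d i then (1:ℝ) else 0))
      = ∑' i, (if ε * s < d i then s else 0) := by
    rw [← tsum_mul_left]
    exact tsum_congr fun i => by by_cases h : ε * s < d i <;> simp [h]
  have h2 : (∑' i, (if ε * s < d i then s else 0))
      = (∑' i, (if ε * s < d i then s - d i else 0))
        + (∑' i, (if ε * s < d i then d i else 0)) := by
    rw [← Summable.tsum_add hA hB]
    exact tsum_congr fun i => by by_cases h : ε * s < d i <;> simp [h]
  have h3 : (∑' i, (if ε * s < d i then d i else 0))
      + (∑' i, (if ε * s < d i then 0 else d i)) = s := by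
    rw [← Summable.tsum_add hB hC]
    conv_rhs => rw [hsum]
    exact tsum_congr fun i => by by_cases h : ε * s < d i <;> simp [h]
  rw [e0, e1, e2, mul_sub, mul_one, h1, h2]
  linarith [h3]

/-- Stable fragmentation at nodes, `α ∈ (1,2)`: with the same dislocation measure `ν₁`,
`φ_b(ε) := ∫ (Σᵢ 1_{xᵢ>ε} - 1) ν₁(dx)
  = ((α-1)/Γ(1+1/α)) (ε/(1-ε))^{-1/α} - f_b(ε)`,
and consequently `ε^{1/α} φ_b(ε) → (α-1)/Γ(1+1/α)` as `ε → 0`. -/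
theorem stmt16 {Ω : Type*} [MeasureSpace Ω]
    (hP : IsProbabilityMeasure (volume : Measure Ω))
    (α : ℝ) (hα : α ∈ Set.Ioo (1 : ℝ) 2)
    (S1 : Ω → ℝ) (Δ : Ω → ℕ → ℝ)
    (hS1meas : Measurable S1) (hΔmeas : ∀ i, Measurable fun ω => Δ ω i)
    (hpos : ∀ ω, 0 < S1 ω) (hΔpos : ∀ ω i, 0 ≤ Δ ω i)
    (hranked : ∀ ω, Antitone (Δ ω)) (hsum : ∀ ω, S1 ω = ∑' i, Δ ω i)
    (hlap : ∀ y : ℝ, 0 ≤ y →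
      ∫ ω, Real.exp (-y * S1 ω) = Real.exp (-(y ^ (1 / α))))
    (hMecke : ∀ g : ℝ → ℝ → ℝ, Measurable (Function.uncurry g) →
      (∀ r s, 0 ≤ g r s) →
      ∫ ω, (∑' i, g (Δ ω i) (S1 ω - Δ ω i))
        = ∫ ω, (∫ r in Set.Ioi (0 : ℝ),
            g r (S1 ω) * ((α * Real.Gamma (1 - 1 / α))⁻¹ * r ^ (-1 - 1 / α))))
    (hmom : ∫ ω, (S1 ω) ^ (1 - 1 / α) = Real.Gamma (2 - α) / Real.Gamma (1 / α)) :
    (∀ ε : ℝ, ε ∈ Set.Ioo (0 : ℝ) 1 →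
      (α * (α - 1) * Real.Gamma (1 - 1 / α) / Real.Gamma (2 - α)) *
        ∫ ω, S1 ω *
          ((∑' i, (if ε < Δ ω i / S1 ω then (1 : ℝ) else 0)) - 1)
        = ((α - 1) / Real.Gamma (1 + 1 / α)) * (ε / (1 - ε)) ^ (-1 / α)
          - (1 / Real.Gamma (1 + 1 / α)) * (ε / (1 - ε)) ^ (1 - 1 / α)) ∧
    Tendsto (fun ε : ℝ =>
        ε ^ (1 / α) *
          ((α * (α - 1) * Real.Gamma (1 - 1 / α) / Real.Gamma (2 - α)) *
            ∫ ω, S1 ω *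
              ((∑' i, (if ε < Δ ω i / S1 ω then (1 : ℝ) else 0)) - 1)))
      (nhdsWithin 0 (Set.Ioi 0)) (nhds ((α - 1) / Real.Gamma (1 + 1 / α))) := by
  obtain ⟨hα1, hα2⟩ := hα
  have hαpos : (0:ℝ) < α := by linarith
  have hia : 0 < 1 / α := by positivity
  have hia1 : 1 / α < 1 := by rw [div_lt_one hαpos]; linarith
  have hΓ1 : 0 < Real.Gamma (1 - 1 / α) := Real.Gamma_pos_of_pos (by linarith)
  have hΓ2 : 0 < Real.Gamma (2 - α) := Real.Gamma_pos_of_pos (by linarith)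
  have hΓ3 : 0 < Real.Gamma (1 / α) := Real.Gamma_pos_of_pos hia
  have hΓ4 : Real.Gamma (1 + 1/α) = (1/α) * Real.Gamma (1/α) := by
    rw [add_comm, Real.Gamma_add_one hia.ne']
  have key : ∀ ε : ℝ, ε ∈ Set.Ioo (0:ℝ) 1 →
      (α * (α - 1) * Real.Gamma (1 - 1 / α) / Real.Gamma (2 - α)) *
        ∫ ω, S1 ω * ((∑' i, (if ε < Δ ω i / S1 ω then (1 : ℝ) else 0)) - 1)
      = ((α - 1) / Real.Gamma (1 + 1 / α)) * (ε / (1 - ε)) ^ (-1 / α)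
        - (1 / Real.Gamma (1 + 1 / α)) * (ε / (1 - ε)) ^ (1 - 1 / α) := by
    intro ε hε
    obtain ⟨hε0, hε1⟩ := hε
    have h1ε : 0 < 1 - ε := by linarith
    have hq : 0 < ε / (1 - ε) := by positivity
    have hmg1 : Measurable (Function.uncurry
        (fun r s : ℝ => if ε * (r + s) < r then max s 0 else 0)) := by
      apply Measurable.ite
      · exact measurableSet_lt (measurable_const.mul (measurable_fst.add measurable_snd))
          measurable_fst
      · exact measurable_snd.max measurable_const
      · exact measurable_const
    have hmg2 : Measurable (Function.uncurry
        (fun r s : ℝ => if ε * (r + s) < r then 0 else max r 0)) := by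
      apply Measurable.ite
      · exact measurableSet_lt (measurable_const.mul (measurable_fst.add measurable_snd))
          measurable_fst
      · exact measurable_const
      · exact measurable_fst.max measurable_const
    have hnn1 : ∀ r s : ℝ, 0 ≤ (if ε * (r + s) < r then max s 0 else 0) := by
      intro r s; split
      · exact le_max_right _ _
      · exact le_rfl
    have hnn2 : ∀ r s : ℝ, 0 ≤ (if ε * (r + s) < r then 0 else max r 0) := by
      intro r s; split
      · exact le_rfl
      · exact le_max_right _ _
    have hM1 := hMecke (fun r s : ℝ => if ε * (r + s) < r then max s 0 else 0) hmg1 hnn1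
    have hM2 := hMecke (fun r s : ℝ => if ε * (r + s) < r then 0 else max r 0) hmg2 hnn2
    have hV1 : (∫ ω, ∑' i, (if ε * (Δ ω i + (S1 ω - Δ ω i)) < Δ ω i
          then max (S1 ω - Δ ω i) 0 else 0))
        = ((α * Real.Gamma (1 - 1 / α))⁻¹ * α * (ε / (1 - ε)) ^ (-(1 / α))) *
            (Real.Gamma (2 - α) / Real.Gamma (1 / α)) := by
      rw [hM1, ← hmom, ← MeasureTheory.integral_const_mul]
      exact integral_congr_ae (Filter.Eventually.of_forall
        (fun ω => stmt16_inner1 α ε (S1 ω) hα1 hα2 hε0 hε1 (hpos ω)))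
    have hV2 : (∫ ω, ∑' i, (if ε * (Δ ω i + (S1 ω - Δ ω i)) < Δ ω i
          then 0 else max (Δ ω i) 0))
        = ((α * Real.Gamma (1 - 1 / α))⁻¹ * (1 - 1 / α)⁻¹ * (ε / (1 - ε)) ^ (1 - 1 / α)) *
            (Real.Gamma (2 - α) / Real.Gamma (1 / α)) := by
      rw [hM2, ← hmom, ← MeasureTheory.integral_const_mul]
      exact integral_congr_ae (Filter.Eventually.of_forall
        (fun ω => stmt16_inner2 α ε (S1 ω) hα1 hα2 hε0 hε1 (hpos ω)))
    have hPos1 : 0 < ((α * Real.Gamma (1 - 1 / α))⁻¹ * α * (ε / (1 - ε)) ^ (-(1 / α))) *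
        (Real.Gamma (2 - α) / Real.Gamma (1 / α)) := by
      apply mul_pos (mul_pos (mul_pos (inv_pos.2 (mul_pos hαpos hΓ1)) hαpos)
        (Real.rpow_pos_of_pos hq _)) (div_pos hΓ2 hΓ3)
    have hPos2 : 0 < ((α * Real.Gamma (1 - 1 / α))⁻¹ * (1 - 1 / α)⁻¹ *
          (ε / (1 - ε)) ^ (1 - 1 / α)) *
        (Real.Gamma (2 - α) / Real.Gamma (1 / α)) := by
      apply mul_pos (mul_pos (mul_pos (inv_pos.2 (mul_pos hαpos hΓ1))
        (inv_pos.2 (by linarith))) (Real.rpow_pos_of_pos hq _)) (div_pos hΓ2 hΓ3)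
    have hInt1 : Integrable (fun ω => ∑' i, (if ε * (Δ ω i + (S1 ω - Δ ω i)) < Δ ω i
        then max (S1 ω - Δ ω i) 0 else 0)) := by
      by_contra h
      rw [MeasureTheory.integral_undef h] at hV1
      exact hPos1.ne' hV1.symm
    have hInt2 : Integrable (fun ω => ∑' i, (if ε * (Δ ω i + (S1 ω - Δ ω i)) < Δ ω i
        then 0 else max (Δ ω i) 0)) := by
      by_contra h
      rw [MeasureTheory.integral_undef h] at hV2
      exact hPos2.ne' hV2.symm
    have hpt : ∀ ω, S1 ω * ((∑' i, (if ε < Δ ω i / S1 ω then (1:ℝ) else 0)) - 1)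
        = (∑' i, (if ε * (Δ ω i + (S1 ω - Δ ω i)) < Δ ω i
            then max (S1 ω - Δ ω i) 0 else 0))
          - (∑' i, (if ε * (Δ ω i + (S1 ω - Δ ω i)) < Δ ω i
            then 0 else max (Δ ω i) 0)) :=
      fun ω => stmt16_pointwise ε (S1 ω) (Δ ω) (hpos ω) (hΔpos ω) (hsum ω) hε0
    have hIeq : (∫ ω, S1 ω * ((∑' i, (if ε < Δ ω i / S1 ω then (1:ℝ) else 0)) - 1))
        = (((α * Real.Gamma (1 - 1 / α))⁻¹ * α * (ε / (1 - ε)) ^ (-(1 / α))) *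
            (Real.Gamma (2 - α) / Real.Gamma (1 / α)))
          - (((α * Real.Gamma (1 - 1 / α))⁻¹ * (1 - 1 / α)⁻¹ *
              (ε / (1 - ε)) ^ (1 - 1 / α)) *
            (Real.Gamma (2 - α) / Real.Gamma (1 / α))) := by
      rw [MeasureTheory.integral_congr_ae (Filter.Eventually.of_forall hpt),
        MeasureTheory.integral_sub hInt1 hInt2, hV1, hV2]
    rw [hIeq, hΓ4, show -1/α = -(1/α) from neg_div α 1]
    have hne4 : (1:ℝ) - 1/α ≠ 0 := (by linarith : (0:ℝ) < 1 - 1/α).ne'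
    set X := (ε / (1 - ε)) ^ (-(1/α)) with hXdef
    set Y := (ε / (1 - ε)) ^ (1 - 1/α) with hYdef
    set G1 := Real.Gamma (1 - 1/α) with hG1def
    set G2 := Real.Gamma (2 - α) with hG2def
    set G3 := Real.Gamma (1/α) with hG3def
    have hne1 : G1 ≠ 0 := hΓ1.ne'
    have hne2 : G2 ≠ 0 := hΓ2.ne'
    have hne3 : G3 ≠ 0 := hΓ3.ne'
    have hne5 : α ≠ 0 := hαpos.ne'
    have hne6 : α - 1 ≠ 0 := (by linarith : (0:ℝ) < α - 1).ne'
    have hinv : ((1:ℝ) - 1/α)⁻¹ = α / (α - 1) := by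
      rw [show (1:ℝ) - 1/α = (α - 1)/α by field_simp, inv_div]
    rw [hinv]
    field_simp
  refine ⟨key, ?_⟩
  have hev : (fun ε : ℝ =>
      ((α - 1) / Real.Gamma (1 + 1 / α)) * ((1 - ε) ^ (1/α))
        - (1 / Real.Gamma (1 + 1 / α)) * (ε / (1 - ε) * (1 - ε) ^ (1/α)))
      =ᶠ[nhdsWithin (0:ℝ) (Set.Ioi 0)]
      (fun ε : ℝ =>
        ε ^ (1 / α) *
          ((α * (α - 1) * Real.Gamma (1 - 1 / α) / Real.Gamma (2 - α)) *
            ∫ ω, S1 ω *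
              ((∑' i, (if ε < Δ ω i / S1 ω then (1 : ℝ) else 0)) - 1))) := by
    filter_upwards [Ioo_mem_nhdsGT_of_mem (Set.mem_Ico.2 ⟨le_refl (0:ℝ), one_pos⟩)]
      with ε hε
    rw [key ε hε]
    obtain ⟨hε0, hε1⟩ := hε
    have h1ε : 0 < 1 - ε := by linarith
    have hq : 0 < ε / (1 - ε) := by positivity
    have hX : 0 < ε ^ (1/α) := Real.rpow_pos_of_pos hε0 _
    have hPp : 0 < (1 - ε) ^ (1/α) := Real.rpow_pos_of_pos h1ε _
    have k1 : (ε / (1 - ε)) ^ (1/α) = ε ^ (1/α) / (1 - ε) ^ (1/α) :=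
      Real.div_rpow hε0.le h1ε.le _
    have k2 : (ε / (1 - ε)) ^ (-1/α) = ((1 - ε) ^ (1/α)) / (ε ^ (1/α)) := by
      rw [show -1/α = -(1/α) from neg_div α 1, Real.rpow_neg hq.le, k1, inv_div]
    have k3 : (ε / (1 - ε)) ^ (1 - 1/α)
        = (ε / (1 - ε)) * (((1 - ε) ^ (1/α)) / (ε ^ (1/α))) := by
      rw [show (1:ℝ) - 1/α = 1 + -(1/α) by ring, Real.rpow_add hq, Real.rpow_one,
        ← k2, show -(1/α) = -1/α from (neg_div α 1).symm]
    rw [k2, k3]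
    field_simp
  apply Filter.Tendsto.congr' hev
  have hc : Tendsto (fun ε : ℝ => (1 - ε) ^ (1/α)) (nhdsWithin (0:ℝ) (Set.Ioi 0))
      (nhds 1) := by
    have hcont : ContinuousAt (fun ε : ℝ => (1 - ε) ^ (1/α)) 0 := by
      apply ContinuousAt.rpow_const (continuousAt_const.sub continuousAt_id)
      left; norm_num
    have h6 : Tendsto (fun ε : ℝ => (1 - ε) ^ (1/α)) (nhdsWithin (0:ℝ) (Set.Ioi 0))
        (nhds (((1:ℝ) - 0) ^ (1/α))) := hcont.tendsto.mono_left nhdsWithin_le_nhds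
    simpa using h6
  have hd : Tendsto (fun ε : ℝ => ε / (1 - ε)) (nhdsWithin (0:ℝ) (Set.Ioi 0))
      (nhds 0) := by
    have hcont : ContinuousAt (fun ε : ℝ => ε / (1 - ε)) 0 := by
      apply ContinuousAt.div continuousAt_id (continuousAt_const.sub continuousAt_id)
      norm_num
    have h7 : Tendsto (fun ε : ℝ => ε / (1 - ε)) (nhdsWithin (0:ℝ) (Set.Ioi 0))
        (nhds ((0:ℝ) / (1 - 0))) := hcont.tendsto.mono_left nhdsWithin_le_nhds
    simpa using h7
  have h5 : Tendsto (fun ε : ℝ =>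
      (α - 1) / Real.Gamma (1 + 1/α) * ((1 - ε) ^ (1/α))
        - 1 / Real.Gamma (1 + 1/α) * (ε / (1 - ε) * (1 - ε) ^ (1/α)))
      (nhdsWithin (0:ℝ) (Set.Ioi 0))
      (nhds ((α - 1) / Real.Gamma (1 + 1/α) * 1
        - 1 / Real.Gamma (1 + 1/α) * (0 * 1))) :=
    (tendsto_const_nhds.mul hc).sub (tendsto_const_nhds.mul (hd.mul hc))
  simpa using h5
end
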